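/- arXiv:math/0612424 — 4 statements merged into one kernel-verified Lean document; each statement's English description precedes it below -/
import Mathlib

section
/- Let M be a finitely generated free ℤ-module of rank r with a quadratic norm (inner product) on M ⊗ ℝ. If M is generated by elements of norm at most 1, then χ(M) ≥ log V(r), where χ(M) = log(vol(unit ball)/vol(fundamental domain)) and V(r) is the volume of the unit ball in Euclidean space ℝ^r. -/
open MeasureTheory Module Submodule
open scoped RealInnerProductSpace

/-! Among the generators of norm `≤ 1` pick an `ℝ`-basis `v` of `E`. The sublattice it spans has
covolume `|det v| ≤ ∏ ‖v i‖ ≤ 1` by Hadamard's inequality, and a lattice has covolume at most that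
of any of its sublattices (their ratio is the index). So `covol M ≤ 1`, and
`χ(M) = log V(r) - log covol M ≥ log V(r)`. -/

section

variable {E : Type*} [NormedAddCommGroup E] [InnerProductSpace ℝ E] [FiniteDimensional ℝ E]

theorem OrthonormalBasis.abs_det_le_prod_norm {ι : Type*} [Fintype ι] [DecidableEq ι]
    (c : OrthonormalBasis ι ℝ E) (v : ι → E) : |c.toBasis.det v| ≤ ∏ i, ‖v i‖ := by
  -- In the Gram–Schmidt basis `g` of `v` the matrix of `v` is upper triangular with diagonal
  -- `⟪g i, v i⟫`; changing between orthonormal bases only changes the determinant by `±1`.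
  let e := Fintype.equivFin ι
  have hcard : finrank ℝ E = Fintype.card (Fin (Fintype.card ι)) := by
    rw [Fintype.card_fin, finrank_eq_card_basis c.toBasis]
  let g := InnerProductSpace.gramSchmidtOrthonormalBasis hcard (v ∘ e.symm)
  let g' := (g.reindex e.symm).toBasis
  have hdet : c.toBasis.det v = c.toBasis.det g' * g.toBasis.det (v ∘ e.symm) := by
    rw [← Basis.det_reindex, ← OrthonormalBasis.reindex_toBasis, Basis.det_apply, Basis.det_apply,
      Basis.det_apply, ← Matrix.det_mul, Basis.toMatrix_mul_toMatrix]
  have hc : |c.toBasis.det g'| = 1 := by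
    rw [OrthonormalBasis.coe_toBasis]
    exact c.det_to_matrix_orthonormalBasis _
  rw [hdet, abs_mul, hc, one_mul, InnerProductSpace.gramSchmidtOrthonormalBasis_det,
    ← e.symm.prod_comp, Finset.abs_prod]
  gcongr with i
  calc |⟪g i, v (e.symm i)⟫| ≤ ‖g i‖ * ‖v (e.symm i)‖ := abs_real_inner_le_norm _ _
    _ = ‖v (e.symm i)‖ := by rw [g.orthonormal.1 i, one_mul]

namespace ZLattice

variable [MeasurableSpace E] [BorelSpace E]

theorem covolume_le_covolume_of_le (L₁ L₂ : Submodule ℤ E) [DiscreteTopology L₁] [IsZLattice ℝ L₁]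
    [DiscreteTopology L₂] [IsZLattice ℝ L₂] (h : L₁ ≤ L₂) : covolume L₂ ≤ covolume L₁ := by
  have hindex := covolume_div_covolume_eq_relIndex' L₁ L₂ h
  have hpos : 0 < L₁.toAddSubgroup.relIndex L₂.toAddSubgroup := by
    rw [← Nat.cast_pos (α := ℝ), ← hindex]
    exact div_pos (covolume_pos L₁) (covolume_pos L₂)
  calc covolume L₂ ≤ L₁.toAddSubgroup.relIndex L₂.toAddSubgroup * covolume L₂ :=
        le_mul_of_one_le_left (covolume_pos L₂).le (Nat.one_le_cast.2 hpos)
    _ = covolume L₁ := ((div_eq_iff (covolume_pos L₂).ne').1 hindex).symm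

theorem covolume_span_eq_abs_det {ι : Type*} [Fintype ι] [DecidableEq ι] (v : Basis ι ℝ E)
    (c : OrthonormalBasis ι ℝ E) : covolume (span ℤ (Set.range v)) = |c.toBasis.det v| := by
  have hv : ((↑) ∘ v.restrictScalars ℤ : ι → E) = v := funext (v.restrictScalars_apply ℤ)
  have hc : volume.real (ZSpan.fundamentalDomain c.toBasis) = 1 := by
    rw [measureReal_congr (ZSpan.fundamentalDomain_ae_parallelepiped c.toBasis volume),
      OrthonormalBasis.coe_toBasis, measureReal_def, c.volume_parallelepiped, ENNReal.toReal_one]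
  rw [covolume_eq_det_mul_measureReal _ volume (v.restrictScalars ℤ) c.toBasis, hv, hc, mul_one]

theorem covolume_le_prod_norm (M : Submodule ℤ E) [DiscreteTopology M] [IsZLattice ℝ M]
    {ι : Type*} [Fintype ι] (v : Basis ι ℝ E) (hv : ∀ i, v i ∈ M) :
    covolume M ≤ ∏ i, ‖v i‖ := by
  classical
  let c : OrthonormalBasis ι ℝ E := (stdOrthonormalBasis ℝ E).reindex
    (Fintype.equivOfCardEq (by rw [Fintype.card_fin, finrank_eq_card_basis v]))
  calc covolume M ≤ covolume (span ℤ (Set.range v)) :=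
        covolume_le_covolume_of_le _ _ (span_le.2 (Set.range_subset_iff.2 hv))
    _ = |c.toBasis.det v| := covolume_span_eq_abs_det v c
    _ ≤ ∏ i, ‖v i‖ := c.abs_det_le_prod_norm v

theorem covolume_le_one_of_span_eq (M : Submodule ℤ E) [DiscreteTopology M] [IsZLattice ℝ M]
    {s : Set E} (hs : span ℤ s = M) (hnorm : ∀ x ∈ s, ‖x‖ ≤ 1) : covolume M ≤ 1 := by
  have hspan : ⊤ ≤ span ℝ s := by
    rw [← span_span_of_tower (R := ℤ), hs, IsZLattice.span_top]
  let v := Basis.ofSpan hspan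
  have hvs : ∀ i, v i ∈ s := fun i => Basis.ofSpan_subset hspan ⟨i, rfl⟩
  have := Fintype.ofFinite ((linearIndepOn_empty ℝ id).extend (Set.empty_subset s))
  calc covolume M ≤ ∏ i, ‖v i‖ := covolume_le_prod_norm M v fun i => hs ▸ subset_span (hvs i)
    _ ≤ 1 := Finset.prod_le_one (fun i _ => norm_nonneg _) fun i _ => hnorm _ (hvs i)

end ZLattice

theorem volume_ball_eq_volume_ball_euclideanSpace [MeasurableSpace E] [BorelSpace E] (r : ℝ) :
    volume (Metric.ball (0 : E) r) =
      volume (Metric.ball (0 : EuclideanSpace ℝ (Fin (finrank ℝ E))) r) := by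
  rw [← (stdOrthonormalBasis ℝ E).measurePreserving_repr_symm.measure_preimage
      measurableSet_ball.nullMeasurableSet,
    LinearIsometryEquiv.preimage_ball, LinearIsometryEquiv.symm_symm, map_zero]

end

/-- If a `ℤ`-lattice `M` in a Euclidean space is generated by elements of norm at most `1`,
then `χ(M) = log(vol(unit ball)/covol(M)) ≥ log V(r)`, where `V(r)` is the volume of the
unit ball in `ℝ^r` and `r = rank M`. -/
theorem chi_ge_log_unit_ball_volume
    {E : Type*} [NormedAddCommGroup E] [InnerProductSpace ℝ E] [FiniteDimensional ℝ E]
    [MeasurableSpace E] [BorelSpace E]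
    (M : Submodule ℤ E) [DiscreteTopology M] [IsZLattice ℝ M]
    (hgen : ∃ s : Set E, Submodule.span ℤ s = M ∧ ∀ x ∈ s, ‖x‖ ≤ 1) :
    Real.log ((volume (Metric.ball (0 : E) 1)).toReal / ZLattice.covolume M) ≥
      Real.log
        ((volume (Metric.ball (0 : EuclideanSpace ℝ (Fin (finrank ℤ M))) 1)).toReal) := by
  obtain ⟨s, hs, hnorm⟩ := hgen
  rw [ZLattice.rank ℝ M, volume_ball_eq_volume_ball_euclideanSpace]
  have hV : 0 < (volume (Metric.ball (0 : EuclideanSpace ℝ (Fin (finrank ℝ E))) 1)).toReal :=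
    ENNReal.toReal_pos (Metric.measure_ball_pos volume _ one_pos).ne' measure_ball_lt_top.ne
  exact Real.log_le_log hV <| le_div_self hV.le (ZLattice.covolume_pos M)
    (ZLattice.covolume_le_one_of_span_eq M hs hnorm)
end

section
/- Let 0 → M' → M → M'' → 0 be an exact sequence of finitely generated free ℤ-modules, where M sits as a lattice in a real inner product space M_ℝ, M'_ℝ carries the subspace inner product and M''_ℝ the quotient inner product. Then χ(M) - χ(M') - χ(M'') = log V(rank M) - log V(rank M') - log V(rank M''), where V(r) is the volume of the unit ball in ℝ^r. -/
/-!
The ball volumes depend only on the dimensions, which equal the ranks, so the identity is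
`covol M = covol M' * covol M''`. As `M''` is free, the sequence of lattices splits, giving a
basis of `M` made of the images `f b'` and of lifts of a basis `b''` of `M''`. The inverse `σ`
of the isometry `g : (ker g)ᗮ ≃ E''` is the adjoint of `g`, so orthonormal bases `e'`, `e''`
of `E'`, `E''` give the orthonormal basis `f e' ∪ σ e''` of `E`. In it the basis of `M` has a
block upper triangular matrix whose diagonal blocks are the matrices of `b'` in `e'` and of
`b''` in `e''`, and the determinants multiply.
-/

open MeasureTheory Module

noncomputable def unitBallVol (r : ℕ) : ℝ :=
  (volume (Metric.ball (0 : EuclideanSpace ℝ (Fin r)) 1)).toReal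

open Submodule RealInnerProductSpace

section Lattice

variable {E : Type*} [NormedAddCommGroup E] [InnerProductSpace ℝ E] [FiniteDimensional ℝ E]
  [MeasurableSpace E] [BorelSpace E]

theorem volume_unitBall_toReal_eq_unitBallVol :
    (volume (Metric.ball (0 : E) 1)).toReal = unitBallVol (finrank ℝ E) := by
  rw [unitBallVol, ← ((stdOrthonormalBasis ℝ E).measurePreserving_repr_symm).measure_preimage
      measurableSet_ball.nullMeasurableSet, LinearIsometryEquiv.preimage_ball,
    LinearIsometryEquiv.symm_symm, map_zero]

theorem ZLattice.covolume_eq_abs_det {ι : Type*} [Fintype ι] [DecidableEq ι]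
    (L : Submodule ℤ E) [DiscreteTopology L] [IsZLattice ℝ L]
    (b : Basis ι ℤ L) (e : OrthonormalBasis ι ℝ E) :
    ZLattice.covolume L = |e.toBasis.det ((↑) ∘ b)| := by
  rw [ZLattice.covolume_eq_det_mul_measureReal L volume b e.toBasis,
    measureReal_congr (ZSpan.fundamentalDomain_ae_parallelepiped e.toBasis volume),
    OrthonormalBasis.coe_toBasis, Measure.real, e.volume_parallelepiped, ENNReal.toReal_one,
    mul_one]

theorem ZLattice.log_volume_unitBall_div_covolume
    (L : Submodule ℤ E) [DiscreteTopology L] [IsZLattice ℝ L] :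
    Real.log ((volume (Metric.ball (0 : E) 1)).toReal / ZLattice.covolume L)
      = Real.log (unitBallVol (finrank ℤ L)) - Real.log (ZLattice.covolume L) := by
  have hball : (volume (Metric.ball (0 : E) 1)).toReal ≠ 0 := ENNReal.toReal_ne_zero.mpr
    ⟨(Metric.measure_ball_pos volume 0 one_pos).ne', measure_ball_lt_top.ne⟩
  rw [Real.log_div hball (ZLattice.covolume_ne_zero L volume), ZLattice.rank ℝ L,
    volume_unitBall_toReal_eq_unitBallVol]

end Lattice

theorem Module.Basis.exists_sumElim_of_exact {R A B C ι' ι'' : Type*} [Ring R]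
    [AddCommGroup A] [Module R A] [AddCommGroup B] [Module R B]
    [AddCommGroup C] [Module R C] [Projective R C]
    {j : A →ₗ[R] B} {π : B →ₗ[R] C} (hj : Function.Injective j) (hπ : Function.Surjective π)
    (hexact : Function.Exact j π) (b' : Basis ι' R A) (b'' : Basis ι'' R C) :
    ∃ c : Basis (ι' ⊕ ι'') R B, (∀ i, c (.inl i) = j (b' i)) ∧ ∀ i, π (c (.inr i)) = b'' i := by
  obtain ⟨s, hs⟩ := Module.projective_lifting_property π LinearMap.id hπ
  obtain ⟨e, hej, heπ⟩ := hexact.splitSurjectiveEquiv hj ⟨s, hs⟩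
  refine ⟨(b'.prod b'').map e.symm, fun i ↦ ?_, fun i ↦ ?_⟩
  · simp [hej]
  · simp [heπ]

theorem exists_basis_sumElim_of_map_eq {E' E E'' ι' ι'' : Type*}
    [AddCommGroup E'] [Module ℝ E'] [AddCommGroup E] [Module ℝ E]
    [AddCommGroup E''] [Module ℝ E'']
    (f : E' →ₗ[ℝ] E) (hf : Function.Injective f) (g : E →ₗ[ℝ] E'')
    (M' : Submodule ℤ E') (M : Submodule ℤ E) (M'' : Submodule ℤ E'') [Projective ℤ M'']
    (hM' : M'.map (f.restrictScalars ℤ) = M ⊓ (LinearMap.ker g).restrictScalars ℤ)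
    (hM'' : M.map (g.restrictScalars ℤ) = M'')
    (b' : Basis ι' ℤ M') (b'' : Basis ι'' ℤ M'') :
    ∃ c : Basis (ι' ⊕ ι'') ℤ M,
      (∀ i, (c (.inl i) : E) = f (b' i)) ∧ ∀ i, g (c (.inr i)) = b'' i := by
  have hfM' : ∀ x : M', f x ∈ M ⊓ (LinearMap.ker g).restrictScalars ℤ :=
    fun x ↦ hM' ▸ mem_map_of_mem x.2
  let j : M' →ₗ[ℤ] M := (f.restrictScalars ℤ ∘ₗ M'.subtype).codRestrict M fun x ↦ (hfM' x).1
  let π : M →ₗ[ℤ] M'' := (g.restrictScalars ℤ ∘ₗ M.subtype).codRestrict M''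
    fun x ↦ hM'' ▸ mem_map_of_mem x.2
  have hj : Function.Injective j := fun x y hxy ↦
    Subtype.ext (hf (congrArg Subtype.val hxy))
  have hπ : Function.Surjective π := fun y ↦ by
    obtain ⟨x, hx, hgx⟩ : (y : E'') ∈ M.map (g.restrictScalars ℤ) := hM'' ▸ y.2
    exact ⟨⟨x, hx⟩, Subtype.ext hgx⟩
  have hjπ : Function.Exact j π := fun x ↦ by
    refine ⟨fun hx ↦ ?_, fun ⟨y, hy⟩ ↦ hy ▸ Subtype.ext (hfM' y).2⟩
    obtain ⟨y, hy, hfy⟩ : (x : E) ∈ M'.map (f.restrictScalars ℤ) :=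
      hM' ▸ ⟨x.2, congrArg Subtype.val hx⟩
    exact ⟨⟨y, hy⟩, Subtype.ext hfy⟩
  obtain ⟨c, hcj, hcπ⟩ := Basis.exists_sumElim_of_exact hj hπ hjπ b' b''
  exact ⟨c, fun i ↦ congrArg Subtype.val (hcj i), fun i ↦ congrArg Subtype.val (hcπ i)⟩

section Orthogonal

variable {E' E E'' : Type*}
  [NormedAddCommGroup E'] [InnerProductSpace ℝ E']
  [NormedAddCommGroup E] [InnerProductSpace ℝ E]
  [NormedAddCommGroup E''] [InnerProductSpace ℝ E'']

theorem LinearMap.exists_linearIsometry_adjoint [FiniteDimensional ℝ E] (g : E →ₗ[ℝ] E'')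
    (hg : Function.Surjective g) (hnorm : ∀ x ∈ (LinearMap.ker g)ᗮ, ‖g x‖ = ‖x‖) :
    ∃ σ : E'' →ₗᵢ[ℝ] E, ∀ x y, ⟪σ y, x⟫ = ⟪y, g x⟫ := by
  set K := LinearMap.ker g
  have hgK : ∀ k ∈ K, ∀ w, g (k + w) = g w := fun k hk w ↦ by
    rw [map_add, LinearMap.mem_ker.mp hk, zero_add]
  let G : Kᗮ →ₗᵢ[ℝ] E'' := ⟨g ∘ₗ Kᗮ.subtype, fun x ↦ hnorm x x.2⟩
  have hG : Function.Surjective G := fun y ↦ by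
    obtain ⟨x, rfl⟩ := hg y
    obtain ⟨k, hk, w, hw, rfl⟩ := K.exists_add_mem_mem_orthogonal x
    exact ⟨⟨w, hw⟩, (hgK k hk w).symm⟩
  let Φ := LinearIsometryEquiv.ofSurjective G hG
  refine ⟨Kᗮ.subtypeₗᵢ.comp Φ.symm.toLinearIsometry, fun x y ↦ ?_⟩
  obtain ⟨k, hk, w, hw, rfl⟩ := K.exists_add_mem_mem_orthogonal x
  have hk0 : ⟪(Φ.symm y : E), k⟫ = 0 := Submodule.inner_left_of_mem_orthogonal hk (Φ.symm y).2
  calc ⟪(Φ.symm y : E), k + w⟫ = ⟪Φ.symm y, (⟨w, hw⟩ : Kᗮ)⟫ := by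
        rw [inner_add_right, hk0, zero_add, Submodule.coe_inner]
    _ = ⟪y, Φ ⟨w, hw⟩⟫ := by rw [← Φ.inner_map_map, Φ.apply_symm_apply]
    _ = ⟪y, g (k + w)⟫ := by rw [hgK k hk w]; rfl

theorem exists_orthonormalBasis_sumElim [FiniteDimensional ℝ E]
    {ι' ι'' : Type*} [Fintype ι'] [Fintype ι'']
    (f : E' →ₗᵢ[ℝ] E) (σ : E'' →ₗᵢ[ℝ] E) (horth : ∀ x y, ⟪f x, σ y⟫ = 0)
    (e' : OrthonormalBasis ι' ℝ E') (e'' : OrthonormalBasis ι'' ℝ E'')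
    (hcard : Fintype.card (ι' ⊕ ι'') = finrank ℝ E) :
    ∃ b : OrthonormalBasis (ι' ⊕ ι'') ℝ E, ⇑b = Sum.elim (f ∘ e') (σ ∘ e'') := by
  classical
  have hon : Orthonormal ℝ (Sum.elim (f ∘ e') (σ ∘ e'')) := by
    rw [orthonormal_iff_ite]
    rintro (i | i) (j | j)
    · simpa using orthonormal_iff_ite.mp e'.orthonormal i j
    · simpa using horth (e' i) (e'' j)
    · simpa [real_inner_comm] using horth (e' j) (e'' i)
    · simpa using orthonormal_iff_ite.mp e''.orthonormal i j
  exact ⟨.mk hon (hon.linearIndependent.span_eq_top_of_card_eq_finrank' hcard).ge,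
    OrthonormalBasis.coe_mk _ _⟩

theorem OrthonormalBasis.det_sumElim_eq_mul_det {ι' ι'' : Type*} [Fintype ι'] [Fintype ι'']
    [DecidableEq ι'] [DecidableEq ι'']
    (f : E' →ₗᵢ[ℝ] E) (g : E →ₗ[ℝ] E'') (σ : E'' →ₗᵢ[ℝ] E)
    (hσ : ∀ x y, ⟪σ y, x⟫ = ⟪y, g x⟫) (hgf : ∀ x, g (f x) = 0)
    (e' : OrthonormalBasis ι' ℝ E') (e'' : OrthonormalBasis ι'' ℝ E'')
    (b : OrthonormalBasis (ι' ⊕ ι'') ℝ E) (hb : ⇑b = Sum.elim (f ∘ e') (σ ∘ e''))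
    (u' : ι' → E') (u : ι'' → E) :
    b.toBasis.det (Sum.elim (f ∘ u') u) = e'.toBasis.det u' * e''.toBasis.det (g ∘ u) := by
  have hmat : b.toBasis.toMatrix (Sum.elim (f ∘ u') u) = Matrix.fromBlocks
      (e'.toBasis.toMatrix u') (.of fun k l ↦ ⟪f (e' k), u l⟫) 0 (e''.toBasis.toMatrix (g ∘ u)) := by
    ext (k | k) (l | l) <;>
      simp [Basis.toMatrix_apply, OrthonormalBasis.repr_apply_apply, hb, hσ, hgf]
  rw [Basis.det_apply, Basis.det_apply, Basis.det_apply, hmat, Matrix.det_fromBlocks_zero₂₁]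

end Orthogonal

theorem ZLattice.covolume_eq_covolume_mul_covolume_of_exact
    {E' E E'' : Type*}
    [NormedAddCommGroup E'] [InnerProductSpace ℝ E'] [FiniteDimensional ℝ E']
    [MeasurableSpace E'] [BorelSpace E']
    [NormedAddCommGroup E] [InnerProductSpace ℝ E] [FiniteDimensional ℝ E]
    [MeasurableSpace E] [BorelSpace E]
    [NormedAddCommGroup E''] [InnerProductSpace ℝ E''] [FiniteDimensional ℝ E'']
    [MeasurableSpace E''] [BorelSpace E'']
    (f : E' →ₗᵢ[ℝ] E) (g : E →ₗ[ℝ] E'')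
    (hsurj : Function.Surjective g)
    (hexact : LinearMap.ker g = LinearMap.range f.toLinearMap)
    (hquot : ∀ x ∈ (LinearMap.ker g)ᗮ, ‖g x‖ = ‖x‖)
    (M' : Submodule ℤ E') [DiscreteTopology M'] [IsZLattice ℝ M']
    (M : Submodule ℤ E) [DiscreteTopology M] [IsZLattice ℝ M]
    (M'' : Submodule ℤ E'') [DiscreteTopology M''] [IsZLattice ℝ M'']
    (hM' : M'.map (f.toLinearMap.restrictScalars ℤ) =
      M ⊓ (LinearMap.ker g).restrictScalars ℤ)
    (hM'' : M.map (g.restrictScalars ℤ) = M'') :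
    ZLattice.covolume M = ZLattice.covolume M' * ZLattice.covolume M'' := by
  obtain ⟨σ, hσ⟩ := g.exists_linearIsometry_adjoint hsurj hquot
  have hgf : ∀ x, g (f x) = 0 := fun x ↦ hexact.ge ⟨x, rfl⟩
  let b' := finBasisOfFinrankEq ℤ M' (ZLattice.rank ℝ M')
  let b'' := finBasisOfFinrankEq ℤ M'' (ZLattice.rank ℝ M'')
  obtain ⟨c, hcf, hcg⟩ :=
    exists_basis_sumElim_of_map_eq f.toLinearMap f.injective g M' M M'' hM' hM'' b' b''
  obtain ⟨b, hb⟩ := exists_orthonormalBasis_sumElim f σ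
    (fun x y ↦ by rw [real_inner_comm, hσ, hgf, inner_zero_right])
    (stdOrthonormalBasis ℝ E') (stdOrthonormalBasis ℝ E'')
    (by rw [← finrank_eq_card_basis c, ZLattice.rank ℝ M])
  have hc : ((↑) ∘ c : _ → E) = Sum.elim (f ∘ (↑) ∘ b') ((↑) ∘ c ∘ .inr) := by
    ext (i | i)
    · exact hcf i
    · rfl
  have hgc : g ∘ (↑) ∘ c ∘ .inr = (↑) ∘ b'' := funext hcg
  rw [covolume_eq_abs_det M c b, covolume_eq_abs_det M' b' (stdOrthonormalBasis ℝ E'),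
    covolume_eq_abs_det M'' b'' (stdOrthonormalBasis ℝ E''), hc,
    OrthonormalBasis.det_sumElim_eq_mul_det f g σ hσ hgf _ _ b hb, hgc, abs_mul]

/-- Exact additivity of the arithmetic volume `χ` in an exact sequence
`0 → M' → M → M'' → 0` of lattices, where `M'` carries the subspace inner product
(encoded by the isometric embedding `f`) and `M''` the quotient inner product (encoded by
the surjection `g` which is isometric on the orthogonal complement of its kernel):
`χ(M) - χ(M') - χ(M'') = log V(rank M) - log V(rank M') - log V(rank M'')`. -/
theorem chi_sub_chi_sub_chi_eq
    {E' E E'' : Type*}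
    [NormedAddCommGroup E'] [InnerProductSpace ℝ E'] [FiniteDimensional ℝ E']
    [MeasurableSpace E'] [BorelSpace E']
    [NormedAddCommGroup E] [InnerProductSpace ℝ E] [FiniteDimensional ℝ E]
    [MeasurableSpace E] [BorelSpace E]
    [NormedAddCommGroup E''] [InnerProductSpace ℝ E''] [FiniteDimensional ℝ E'']
    [MeasurableSpace E''] [BorelSpace E'']
    (f : E' →ₗᵢ[ℝ] E) (g : E →ₗ[ℝ] E'')
    (hsurj : Function.Surjective g)
    (hexact : LinearMap.ker g = LinearMap.range f.toLinearMap)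
    (hquot : ∀ x ∈ (LinearMap.ker g)ᗮ, ‖g x‖ = ‖x‖)
    (M' : Submodule ℤ E') [DiscreteTopology M'] [IsZLattice ℝ M']
    (M : Submodule ℤ E) [DiscreteTopology M] [IsZLattice ℝ M]
    (M'' : Submodule ℤ E'') [DiscreteTopology M''] [IsZLattice ℝ M'']
    (hM' : M'.map (f.toLinearMap.restrictScalars ℤ) =
      M ⊓ (LinearMap.ker g).restrictScalars ℤ)
    (hM'' : M.map (g.restrictScalars ℤ) = M'') :
    Real.log ((volume (Metric.ball (0 : E) 1)).toReal / ZLattice.covolume M)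
      - Real.log ((volume (Metric.ball (0 : E') 1)).toReal / ZLattice.covolume M')
      - Real.log ((volume (Metric.ball (0 : E'') 1)).toReal / ZLattice.covolume M'')
    = Real.log (unitBallVol (finrank ℤ M)) - Real.log (unitBallVol (finrank ℤ M'))
      - Real.log (unitBallVol (finrank ℤ M'')) := by
  rw [ZLattice.log_volume_unitBall_div_covolume M, ZLattice.log_volume_unitBall_div_covolume M',
    ZLattice.log_volume_unitBall_div_covolume M'',
    ZLattice.covolume_eq_covolume_mul_covolume_of_exact f g hsurj hexact hquot M' M M'' hM' hM'',
    Real.log_mul (ZLattice.covolume_ne_zero M' volume) (ZLattice.covolume_ne_zero M'' volume)]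
  ring
end

section
/- The volume V(r) = π^{r/2}/Γ(r/2+1) of the unit ball in ℝ^r satisfies V(a+b) ≤ V(a)·V(b) for all nonnegative integers a, b. -/
/-! A convex function `f` on `[0, ∞)` with `f 0 ≤ 0` is superadditive: `f x ≤ (x / (x + y)) f (x + y)`
by convexity between `0` and `x + y`, and likewise for `y`. Applied to `t ↦ log Γ(t + 1)`, which is
convex by Bohr–Mollerup and vanishes at `0`, this gives `Γ(x + 1) Γ(y + 1) ≤ Γ(x + y + 1)`. Since
`π^(r/2)` is multiplicative in `r`, the inequality for `V` follows. -/

open Real Set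

section Superadditive

variable {𝕜 : Type*} [Field 𝕜] [LinearOrder 𝕜] [IsStrictOrderedRing 𝕜] {f : 𝕜 → 𝕜}

theorem ConvexOn.map_mul_le_mul_of_map_zero_nonpos (hf : ConvexOn 𝕜 (Ici 0) f) (hf₀ : f 0 ≤ 0)
    {t x : 𝕜} (ht₀ : 0 ≤ t) (ht₁ : t ≤ 1) (hx : 0 ≤ x) : f (t * x) ≤ t * f x := by
  have h := hf.2 (mem_Ici.2 hx) (mem_Ici.2 le_rfl) ht₀ (sub_nonneg.2 ht₁) (add_sub_cancel t 1)
  simp only [smul_eq_mul, mul_zero, add_zero] at h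
  linarith [mul_nonpos_of_nonneg_of_nonpos (sub_nonneg.2 ht₁) hf₀]

theorem ConvexOn.add_le_map_add_of_map_zero_nonpos (hf : ConvexOn 𝕜 (Ici 0) f) (hf₀ : f 0 ≤ 0)
    {x y : 𝕜} (hx : 0 ≤ x) (hy : 0 ≤ y) : f x + f y ≤ f (x + y) := by
  rcases (add_nonneg hx hy).eq_or_lt with hxy | hxy
  · obtain ⟨rfl, rfl⟩ : x = 0 ∧ y = 0 := ⟨by linarith, by linarith⟩
    simpa using hf₀
  have hfx := hf.map_mul_le_mul_of_map_zero_nonpos hf₀ (t := x / (x + y)) (by positivity)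
    ((div_le_one hxy).2 (by linarith)) hxy.le
  have hfy := hf.map_mul_le_mul_of_map_zero_nonpos hf₀ (t := y / (x + y)) (by positivity)
    ((div_le_one hxy).2 (by linarith)) hxy.le
  rw [div_mul_cancel₀ _ hxy.ne'] at hfx hfy
  calc f x + f y ≤ x / (x + y) * f (x + y) + y / (x + y) * f (x + y) := add_le_add hfx hfy
    _ = f (x + y) := by rw [← add_mul, ← add_div, div_self hxy.ne', one_mul]

end Superadditive

theorem Real.convexOn_log_Gamma_add_one : ConvexOn ℝ (Ici 0) fun t ↦ log (Gamma (t + 1)) :=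
  (convexOn_log_Gamma.translate_left 1).subset (fun t (ht : 0 ≤ t) ↦ by
    rw [preimage_const_add_Ioi, zero_sub, mem_Ioi]; linarith)
    (convex_Ici 0)

theorem Real.Gamma_add_one_mul_Gamma_add_one_le {x y : ℝ} (hx : 0 ≤ x) (hy : 0 ≤ y) :
    Gamma (x + 1) * Gamma (y + 1) ≤ Gamma (x + y + 1) := by
  have h := convexOn_log_Gamma_add_one.add_le_map_add_of_map_zero_nonpos (by simp) hx hy
  have hΓx : 0 < Gamma (x + 1) := Gamma_pos_of_pos (by linarith)
  have hΓy : 0 < Gamma (y + 1) := Gamma_pos_of_pos (by linarith)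
  rwa [← log_mul hΓx.ne' hΓy.ne', log_le_log_iff (by positivity) (Gamma_pos_of_pos (by linarith))]
    at h

noncomputable def unitBallVolume (r : ℝ) : ℝ := π ^ (r / 2) / Gamma (r / 2 + 1)

theorem unitBallVolume_add_le_mul_of_nonneg {r s : ℝ} (hr : 0 ≤ r) (hs : 0 ≤ s) :
    unitBallVolume (r + s) ≤ unitBallVolume r * unitBallVolume s := by
  have hΓ := Gamma_add_one_mul_Gamma_add_one_le (div_nonneg hr zero_le_two)
    (div_nonneg hs zero_le_two)
  have hΓr : 0 < Gamma (r / 2 + 1) := Gamma_pos_of_pos (by positivity)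
  have hΓs : 0 < Gamma (s / 2 + 1) := Gamma_pos_of_pos (by positivity)
  rw [unitBallVolume, unitBallVolume, unitBallVolume, add_div, rpow_add pi_pos, div_mul_div_comm]
  gcongr

/-- The volume `V(r) = π^(r/2) / Γ(r/2 + 1)` of the unit ball in `ℝ^r` satisfies
`V(a+b) ≤ V(a) * V(b)` for all nonnegative integers `a`, `b`. -/
theorem unitBallVolume_add_le_mul (a b : ℕ) :
    (Real.pi ^ (((a + b : ℕ) : ℝ) / 2) / Real.Gamma (((a + b : ℕ) : ℝ) / 2 + 1)) ≤
      (Real.pi ^ ((a : ℝ) / 2) / Real.Gamma ((a : ℝ) / 2 + 1)) *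
        (Real.pi ^ ((b : ℝ) / 2) / Real.Gamma ((b : ℝ) / 2 + 1)) := by
  simpa only [unitBallVolume, Nat.cast_add] using
    unitBallVolume_add_le_mul_of_nonneg a.cast_nonneg b.cast_nonneg
end

section
/- Let 0 → M' → M → M'' → 0 be an exact sequence of normed finitely generated ℤ-modules, with M' carrying the subspace norm and M'' the quotient norm. Define L(N) = {m ∈ N : ‖m‖ < 1} and L₂(N) = {m ∈ N : ‖m‖ < 2}. Then #L(M) ≤ #L₂(M') · #L(M''). -/
open Set

lemma encard_prod_aux {α β : Type*} (A : Set α) (B : Set β) :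
    (A ×ˢ B).encard = A.encard * B.encard := by
  simp only [Set.encard, ENat.card]
  rw [Cardinal.mk_congr (Equiv.Set.prod A B), Cardinal.mk_prod, map_mul]
  simp

/-- For an exact sequence `0 → M' → M → M'' → 0` of normed `ℤ`-modules, with `M'` the
part of `M` in a subspace `F` with the restricted norm and `M''` the image of `M` in the
quotient `E ⧸ F` with the quotient norm, counting lattice points gives
`#L(M) ≤ #L₂(M') · #L(M'')` where `L(N) = {m ∈ N : ‖m‖ < 1}` and
`L₂(N) = {m ∈ N : ‖m‖ < 2}`. -/
theorem card_unit_le_card_two_mul_card_unit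
    {E : Type*} [NormedAddCommGroup E] [NormedSpace ℝ E]
    (M : Submodule ℤ E) (F : Submodule ℝ E) :
    ({m : E | m ∈ M ∧ ‖m‖ < 1}).encard ≤
      ({m : E | m ∈ M ⊓ F.restrictScalars ℤ ∧ ‖m‖ < 2}).encard *
        ({q : E ⧸ F | q ∈ M.map (F.mkQ.restrictScalars ℤ) ∧ ‖q‖ < 1}).encard := by
  classical
  set A : Set E := {m : E | m ∈ M ⊓ F.restrictScalars ℤ ∧ ‖m‖ < 2} with hA
  set B : Set (E ⧸ F) := {q : E ⧸ F | q ∈ M.map (F.mkQ.restrictScalars ℤ) ∧ ‖q‖ < 1} with hB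
  set S : Set E := {m : E | m ∈ M ∧ ‖m‖ < 1} with hS
  -- section: for each q in the image of S, pick a representative in S
  have hsec : ∀ q : E ⧸ F, (∃ m ∈ S, F.mkQ m = q) → ∃ m ∈ S, F.mkQ m = q := fun _ h => h
  choose sec hsecS hsecq using fun q (h : ∃ m ∈ S, F.mkQ m = q) => h
  have key : ∀ m ∈ S, ∃ h : ∃ x ∈ S, F.mkQ x = F.mkQ m, True := fun m hm => ⟨⟨m, hm, rfl⟩, trivial⟩
  -- define the map
  let g : E → E × (E ⧸ F) := fun m =>
    if h : ∃ x ∈ S, F.mkQ x = F.mkQ m then (m - sec (F.mkQ m) h, F.mkQ m) else (0, 0)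
  have hmaps : MapsTo g S (A ×ˢ B) := by
    intro m hm
    have hex : ∃ x ∈ S, F.mkQ x = F.mkQ m := ⟨m, hm, rfl⟩
    have hs := hsecS _ hex
    have hq := hsecq _ hex
    simp only [g, dif_pos hex]
    constructor
    · refine ⟨⟨Submodule.sub_mem _ hm.1 hs.1, ?_⟩, ?_⟩
      · exact (Submodule.Quotient.eq F).mp hq.symm
      · calc ‖m - sec (F.mkQ m) hex‖ ≤ ‖m‖ + ‖sec (F.mkQ m) hex‖ := norm_sub_le _ _
          _ < 1 + 1 := add_lt_add hm.2 hs.2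
          _ = 2 := by norm_num
    · refine ⟨⟨m, hm.1, rfl⟩, ?_⟩
      calc ‖F.mkQ m‖ ≤ ‖m‖ := Submodule.Quotient.norm_mk_le F m
        _ < 1 := hm.2
  have hinj : InjOn g S := by
    intro m hm m' hm' hgm
    have hex : ∃ x ∈ S, F.mkQ x = F.mkQ m := ⟨m, hm, rfl⟩
    have hex' : ∃ x ∈ S, F.mkQ x = F.mkQ m' := ⟨m', hm', rfl⟩
    simp only [g, dif_pos hex, dif_pos hex', Prod.mk.injEq] at hgm
    obtain ⟨h1, h2⟩ := hgm
    have : sec (F.mkQ m) hex = sec (F.mkQ m') hex' := by congr 1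
    rw [this] at h1
    exact sub_left_injective h1
  calc S.encard ≤ (A ×ˢ B).encard := Set.InjOn.encard_image hinj ▸
        Set.encard_le_encard (Set.image_subset_iff.mpr hmaps)
    _ = A.encard * B.encard := by
        exact encard_prod_aux A B
end
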